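/- Let G_0 = G and let W_1, …, W_r be such that each W_t is a clique of G_{t−1} and G_t = G_{t−1}|W_t, and define F_t = {x ∈ STAB(G) : x_{W_j} = 1 for j = 1,…,t}. Then for every t ∈ {1,…,r}, the inequality x_{W_t} ≤ 1 is valid for F_{t−1}. -/

import Mathlib

open Finset

variable {V : Type*}

/-- A stable (independent) set of a graph: pairwise non-adjacent vertices. -/
def IsStable (G : SimpleGraph V) (S : Finset V) : Prop :=
  ∀ u ∈ S, ∀ v ∈ S, ¬ G.Adj u v

/-- The characteristic vectors of stable sets of `G`. -/
def stableVecs [DecidableEq V] (G : SimpleGraph V) : Set (V → ℝ) :=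
  {x | ∃ S : Finset V, IsStable G S ∧ x = fun v => if v ∈ S then (1 : ℝ) else 0}

/-- The stable set polytope `STAB(G)`. -/
def STAB [DecidableEq V] (G : SimpleGraph V) : Set (V → ℝ) :=
  convexHull ℝ (stableVecs G)

/-- `x_W = ∑_{v ∈ W} x_v`. -/
def vsum (W : Finset V) (x : V → ℝ) : ℝ := ∑ v ∈ W, x v

/-- The clique projection `G|W`: add every non-edge `uv` with `W ⊆ N(u) ∪ N(v)`. -/
def cliqueProj (G : SimpleGraph V) (W : Finset V) : SimpleGraph V where
  Adj u v := G.Adj u v ∨ (u ≠ v ∧ ¬G.Adj u v ∧ ∀ w ∈ W, G.Adj w u ∨ G.Adj w v)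
  symm := by
    constructor
    rintro u v (h | ⟨hne, hna, h⟩)
    · exact Or.inl h.symm
    · exact Or.inr ⟨hne.symm, fun h' => hna h'.symm, fun w hw => (h w hw).symm⟩
  loopless := by
    constructor
    rintro u (h | ⟨hne, _, _⟩)
    · first | exact G.irrefl h | exact G.loopless.irrefl u h
    · exact hne rfl

/-- Iterated projected graphs: `G_0 = G`, `G_t = G_{t-1} | W_t`. -/
def projSeq (G : SimpleGraph V) (W : ℕ → Finset V) : ℕ → SimpleGraph V
  | 0 => G
  | t + 1 => cliqueProj (projSeq G W t) (W (t + 1))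

/-- `F_t = {x ∈ STAB(G) : x_{W_j} = 1, j = 1, …, t}`. -/
def Fface [DecidableEq V] (G : SimpleGraph V) (W : ℕ → Finset V) (t : ℕ) : Set (V → ℝ) :=
  {x ∈ STAB G | ∀ j ∈ Finset.Icc 1 t, vsum (W j) x = 1}

/-- `α(G[H], c)`: the maximum `c`-weight of a stable set of `G` contained in `H`. -/
noncomputable def alphaW (G : SimpleGraph V) (H : Finset V) (c : V → ℝ) : ℝ :=
  sSup {r : ℝ | ∃ S : Finset V, S ⊆ H ∧ IsStable G S ∧ r = ∑ v ∈ S, c v}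

/-- `α(G[H])`: the maximum cardinality of a stable set of `G` contained in `H`. -/
noncomputable def alphaOn (G : SimpleGraph V) (H : Finset V) : ℕ :=
  sSup {k : ℕ | ∃ S : Finset V, S ⊆ H ∧ IsStable G S ∧ S.card = k}

/-- The stability number `α(G)`. -/
noncomputable def alphaNum [Fintype V] (G : SimpleGraph V) : ℕ :=
  sSup {k : ℕ | ∃ S : Finset V, IsStable G S ∧ S.card = k}

/-- `cᵀx`. -/
def dotp [Fintype V] (c x : V → ℝ) : ℝ := ∑ v, c v * x v

/-- The affine dimension of a set of points. -/
noncomputable def affDim (s : Set (V → ℝ)) : ℕ := Module.finrank ℝ (vectorSpan ℝ s)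

/-- Strong hypertree (with hyperedges of size `k`). -/
inductive IsStrongHypertree [DecidableEq V] (k : ℕ) : Finset V → Finset (Finset V) → Prop
  | base (V' : Finset V) : IsStrongHypertree k V' {V'}
  | step (V' : Finset V) (E : Finset (Finset V)) (v : V) (Wi : Finset V) :
      v ∈ V' → v ∈ Wi → Wi ∈ E →
      (∃ Wj ∈ E, Wj ≠ Wi ∧ (Wi ∩ Wj).card = k - 1) →
      IsStrongHypertree k (V'.erase v) (E.erase Wi) →
      IsStrongHypertree k V' E

/-- Condition (I): `|W_t| = k` and the subgraph of `G_{t-1}` induced by `W_1 ∪ ⋯ ∪ W_t`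
is `k`-partite with stable vertex classes `V_t^1, …, V_t^k`. -/
def CondI [DecidableEq V] (G : SimpleGraph V) (W : ℕ → Finset V)
    (Vc : ℕ → ℕ → Finset V) (k t : ℕ) : Prop :=
  (W t).card = k ∧
  (Finset.Icc 1 k).biUnion (Vc t) = (Finset.Icc 1 t).biUnion W ∧
  (∀ i ∈ Finset.Icc 1 k, ∀ j ∈ Finset.Icc 1 k, i ≠ j → Disjoint (Vc t i) (Vc t j)) ∧
  (∀ i ∈ Finset.Icc 1 k, ∀ u ∈ Vc t i, ∀ v ∈ Vc t i, ¬(projSeq G W (t - 1)).Adj u v)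

/-- Condition (II): `T_t = (V_t, {W_1, …, W_t})` is a strong hypertree. -/
def CondII [DecidableEq V] (W : ℕ → Finset V) (Vc : ℕ → ℕ → Finset V) (k t : ℕ) : Prop :=
  IsStrongHypertree k ((Finset.Icc 1 k).biUnion (Vc t)) ((Finset.Icc 1 t).image W)

/-- Condition (III): every `w ∉ V_t` misses some class `V_t^i` in `G_{t-1}`. -/
def CondIII [DecidableEq V] (G : SimpleGraph V) (W : ℕ → Finset V)
    (Vc : ℕ → ℕ → Finset V) (k t : ℕ) : Prop :=
  ∀ w : V, w ∉ (Finset.Icc 1 k).biUnion (Vc t) →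
    ∃ i ∈ Finset.Icc 1 k, ∀ u ∈ Vc t i, ¬(projSeq G W (t - 1)).Adj w u

/-- Condition (IV). -/
def CondIV [Fintype V] [DecidableEq V] (G : SimpleGraph V) (W : ℕ → Finset V)
    (Vc : ℕ → ℕ → Finset V) (k r : ℕ) : Prop :=
  ∀ i ∈ Finset.Icc 1 (k - 1), ∀ t ∈ Finset.Icc 1 r, ∀ v ∈ W t ∩ Vc t i,
    ∀ w ∈ Finset.univ \ (Finset.Icc 1 k).biUnion (Vc r),
      (∃ z ∈ Vc r i, (projSeq G W r).Adj z w) →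
      (G.Adj v w ∨ ∃ t' ∈ Finset.Icc 1 r,
        (projSeq G W (t' - 1)).IsClique (W t : Set V) ∧
        W t ≠ W t' ∧ (W t ∩ W t').card = k - 1 ∧
        v ∉ W t' ∧ ∃ v' ∈ W t' ∩ Vc r i, (projSeq G W (t' - 1)).Adj v' w)

/-- Condition (V): no vertex of `V_t^k` has a neighbor in `V_r^0` in the graph `G_r`. -/
def CondV [Fintype V] [DecidableEq V] (G : SimpleGraph V) (W : ℕ → Finset V)
    (Vc : ℕ → ℕ → Finset V) (k r t : ℕ) : Prop :=
  ∀ v ∈ Vc t k, ∀ w ∈ Finset.univ \ (Finset.Icc 1 k).biUnion (Vc r),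
    ¬(projSeq G W r).Adj v w

/-- `STAB(G[H])`, embedded in `ℝ^V` (coordinates outside `H` are zero). -/
def STABon [DecidableEq V] (G : SimpleGraph V) (H : Finset V) : Set (V → ℝ) :=
  convexHull ℝ
    {x | ∃ S : Finset V, S ⊆ H ∧ IsStable G S ∧ x = fun v => if v ∈ S then (1 : ℝ) else 0}

/-!
Write `χ_S` for the characteristic vector of `S`. A stable set of `G` that meets the cliques
`W_1, …, W_t` stays stable in `G_t`: a new edge `uv` of `G_{j-1}|W_j` would make every vertex of
`W_j`, in particular the one in the set, adjacent to `u` or `v`. Hence `χ_S` satisfies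
`x_{W_{t+1}} ≤ 1` as soon as `|S ∩ W_j| = 1` for all `j ≤ t`. By induction on `t`, `F_t` lies in the
convex hull of these tight vertices: `F_{t+1}` is the part of `F_t` where the inequality
`x_{W_{t+1}} ≤ 1`, valid on the hull, is attained, and a point of a convex hull at which a valid
inequality is tight is a convex combination of tight generators.
-/

section Face

variable {𝕜 E : Type*} [Field 𝕜] [LinearOrder 𝕜] [IsStrictOrderedRing 𝕜] [AddCommGroup E]
  [Module 𝕜 E]

theorem mem_convexHull_sep_of_map_eq {f : E →ₗ[𝕜] 𝕜} {c : 𝕜} {A : Set E}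
    (hA : ∀ a ∈ A, f a ≤ c) {x : E} (hx : x ∈ convexHull 𝕜 A) (hfx : f x = c) :
    x ∈ convexHull 𝕜 {a ∈ A | f a = c} := by
  set P : Set E := {y | f y ≤ c ∧ (f y = c → y ∈ convexHull 𝕜 {a ∈ A | f a = c})}
  suffices convexHull 𝕜 A ⊆ P from (this hx).2 hfx
  refine convexHull_min (fun a ha => ⟨hA a ha, fun h => subset_convexHull 𝕜 _ ⟨ha, h⟩⟩) ?_
  rintro y ⟨hyc, hy⟩ z ⟨hzc, hz⟩ a b ha hb hab
  have hy0 : 0 ≤ a * (c - f y) := mul_nonneg ha (sub_nonneg.mpr hyc)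
  have hz0 : 0 ≤ b * (c - f z) := mul_nonneg hb (sub_nonneg.mpr hzc)
  simp only [P, Set.mem_ofPred_eq, map_add, map_smul, smul_eq_mul]
  refine ⟨by linear_combination hy0 + hz0 + c * hab, fun heq => ?_⟩
  have hsum : a * (c - f y) + b * (c - f z) = 0 := by linear_combination c * hab - heq
  rcases mul_eq_zero.mp (by linarith : a * (c - f y) = 0) with rfl | hyc'
  · obtain rfl : b = 1 := by simpa using hab
    simpa using hz (by simpa using heq)
  rcases mul_eq_zero.mp (by linarith : b * (c - f z) = 0) with rfl | hzc'
  · obtain rfl : a = 1 := by simpa using hab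
    simpa using hy (by simpa using heq)
  exact convex_convexHull 𝕜 _ (hy (sub_eq_zero.mp hyc').symm) (hz (sub_eq_zero.mp hzc').symm)
    ha hb hab

end Face

def vsumₗ (W : Finset V) : (V → ℝ) →ₗ[ℝ] ℝ := ∑ v ∈ W, LinearMap.proj v

theorem vsumₗ_apply (W : Finset V) (x : V → ℝ) : vsumₗ W x = vsum W x := by
  simp [vsumₗ, vsum]

section StableSets

variable [DecidableEq V]

theorem vsum_indicator (W S : Finset V) :
    vsum W (fun v => if v ∈ S then (1 : ℝ) else 0) = #(W ∩ S) := by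
  simp [vsum, sum_ite_mem]

theorem IsStable.cliqueProj {G : SimpleGraph V} {S W : Finset V} (hS : IsStable G S)
    (hSW : (W ∩ S).Nonempty) : IsStable (cliqueProj G W) S := by
  obtain ⟨w, hw⟩ := hSW
  rw [mem_inter] at hw
  rintro u hu v hv (h | ⟨-, -, h⟩)
  · exact hS u hu v hv h
  · rcases h w hw.1 with h' | h'
    · exact hS w hw.2 u hu h'
    · exact hS w hw.2 v hv h'

theorem IsStable.projSeq {G : SimpleGraph V} {W : ℕ → Finset V} {S : Finset V}
    (hS : IsStable G S) {t : ℕ} (hSW : ∀ j ∈ Icc 1 t, (W j ∩ S).Nonempty) :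
    IsStable (projSeq G W t) S := by
  induction t with
  | zero => exact hS
  | succ t ih =>
    refine IsStable.cliqueProj (ih fun j hj => hSW j ?_) (hSW (t + 1) (by simp))
    exact Icc_subset_Icc_right t.le_succ hj

theorem IsStable.card_inter_le_one {G : SimpleGraph V} {S W : Finset V} (hS : IsStable G S)
    (hW : G.IsClique (W : Set V)) : #(W ∩ S) ≤ 1 := by
  refine card_le_one.mpr fun a ha b hb => ?_
  rw [mem_inter] at ha hb
  by_contra hab
  exact hS a ha.2 b hb.2 (hW ha.1 hb.1 hab)

/-- The vertices of `STAB(G)` lying on `F_t`. -/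
def tightStableVecs (G : SimpleGraph V) (W : ℕ → Finset V) (t : ℕ) : Set (V → ℝ) :=
  {y ∈ stableVecs G | ∀ j ∈ Icc 1 t, vsum (W j) y = 1}

variable {G : SimpleGraph V} {W : ℕ → Finset V}

theorem vsum_le_one_of_mem_tightStableVecs {t : ℕ}
    (hclique : (projSeq G W t).IsClique (W (t + 1) : Set V)) {y : V → ℝ}
    (hy : y ∈ tightStableVecs G W t) : vsum (W (t + 1)) y ≤ 1 := by
  obtain ⟨⟨S, hS, rfl⟩, htight⟩ := hy
  have hmeet : ∀ j ∈ Icc 1 t, (W j ∩ S).Nonempty := fun j hj => by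
    have := htight j hj
    rw [vsum_indicator, Nat.cast_eq_one] at this
    exact card_pos.mp (by omega)
  rw [vsum_indicator]
  exact_mod_cast (hS.projSeq hmeet).card_inter_le_one hclique

theorem Fface_subset_convexHull_tightStableVecs {t : ℕ}
    (hclique : ∀ s < t, (projSeq G W s).IsClique (W (s + 1) : Set V)) :
    Fface G W t ⊆ convexHull ℝ (tightStableVecs G W t) := by
  induction t with
  | zero =>
    rintro x ⟨hx, -⟩
    exact convexHull_mono (fun y hy => ⟨hy, by simp⟩ : stableVecs G ⊆ tightStableVecs G W 0) hx
  | succ t ih =>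
    rintro x ⟨hxSTAB, hx⟩
    have hxt : x ∈ convexHull ℝ (tightStableVecs G W t) :=
      ih (fun s hs => hclique s (by omega))
        ⟨hxSTAB, fun j hj => hx j (Icc_subset_Icc_right t.le_succ hj)⟩
    have hface := mem_convexHull_sep_of_map_eq (f := vsumₗ (W (t + 1)))
      (fun y hy => (vsumₗ_apply _ y).trans_le
        (vsum_le_one_of_mem_tightStableVecs (hclique t t.lt_succ_self) hy))
      hxt ((vsumₗ_apply _ x).trans (hx (t + 1) (by simp)))
    refine convexHull_mono ?_ hface
    rintro y ⟨⟨hy, htight⟩, hy1⟩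
    refine ⟨hy, fun j hj => ?_⟩
    rcases (mem_Icc.mp hj).2.lt_or_eq with hjt | rfl
    · exact htight j (mem_Icc.mpr ⟨(mem_Icc.mp hj).1, by omega⟩)
    · rwa [vsumₗ_apply] at hy1

theorem vsum_le_one_of_mem_Fface {t : ℕ}
    (hclique : ∀ s ≤ t, (projSeq G W s).IsClique (W (s + 1) : Set V)) {x : V → ℝ}
    (hx : x ∈ Fface G W t) : vsum (W (t + 1)) x ≤ 1 := by
  have hvalid : convexHull ℝ (tightStableVecs G W t) ⊆ {y | vsumₗ (W (t + 1)) y ≤ 1} :=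
    convexHull_min (fun y hy => (vsumₗ_apply _ y).trans_le
        (vsum_le_one_of_mem_tightStableVecs (hclique t le_rfl) hy))
      (convex_halfSpace_le (vsumₗ (W (t + 1))).isLinear 1)
  have hxhull := Fface_subset_convexHull_tightStableVecs (fun s hs => hclique s hs.le) hx
  simpa only [Set.mem_ofPred_eq, vsumₗ_apply] using hvalid hxhull

end StableSets

theorem stmt7_general {V : Type*} [DecidableEq V] (G : SimpleGraph V)
    (r : ℕ) (W : ℕ → Finset V)
    (hclique : ∀ t ∈ Finset.Icc 1 r, (projSeq G W (t - 1)).IsClique (W t : Set V)) :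
    ∀ t ∈ Finset.Icc 1 r, ∀ x ∈ Fface G W (t - 1), vsum (W t) x ≤ 1 := by
  intro t ht x hx
  obtain ⟨ht1, htr⟩ := mem_Icc.mp ht
  obtain ⟨s, rfl⟩ : ∃ s, t = s + 1 := Nat.exists_eq_add_one.mpr ht1
  refine vsum_le_one_of_mem_Fface (fun j hj => ?_) hx
  simpa using hclique (j + 1) (mem_Icc.mpr ⟨by omega, by omega⟩)

/-- the inequality `x_{W_t} ≤ 1` is valid for `F_{t-1}`. -/
theorem stmt7 {V : Type*} [Fintype V] [DecidableEq V] (G : SimpleGraph V)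
    (r : ℕ) (W : ℕ → Finset V)
    (hclique : ∀ t ∈ Finset.Icc 1 r, (projSeq G W (t - 1)).IsClique (W t : Set V)) :
    ∀ t ∈ Finset.Icc 1 r, ∀ x ∈ Fface G W (t - 1), vsum (W t) x ≤ 1 :=
  stmt7_general G r W hclique
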